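/- Let 1 ≤ p < q < ∞ and 0 < ε < 1/e. There is a universal constant C > 0 (independent of n, p, q, ε and s; C = 5 suffices) such that: if a vector x ∈ ℝⁿ has an (ε, ℓ_p, s)-norm sparsifier for some positive integer s, then x also has an (ε, ℓ_q, C·s)-norm sparsifier; in fact x_head(k) is such a sparsifier for a suitable integer k ≤ C·s. -/

import Mathlib

open scoped BigOperators ENNReal
open Matrix

/-- Number of nonzero entries of a vector. -/
noncomputable def nnzv {n : ℕ} (x : Fin n → ℝ) : ℕ :=
  (Finset.univ.filter fun i => x i ≠ 0).card

/-- The ℓ_p norm of a vector, for a real exponent `p`. -/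
noncomputable def lpNorm {n : ℕ} (p : ℝ) (x : Fin n → ℝ) : ℝ :=
  (∑ i, |x i| ^ p) ^ (1 / p)

/-- `IsHead x c y` : `y` is obtained from `x` by keeping (at most) `c` entries that are
largest in absolute value (exactly `min c n` of them, ties broken arbitrarily) and zeroing out the rest. -/
def IsHead {n : ℕ} (x : Fin n → ℝ) (c : ℕ) (y : Fin n → ℝ) : Prop :=
  ∃ T : Finset (Fin n), T.card = min c n ∧ (∀ i ∈ T, y i = x i) ∧ (∀ i ∉ T, y i = 0) ∧
    ∀ i ∈ T, ∀ j ∉ T, |x j| ≤ |x i|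

/-- The singular values of a real matrix: square roots of the eigenvalues of `Aᵀ * A`. -/
noncomputable def singVals {m n : Type*} [Fintype m] [Fintype n] [DecidableEq n]
    (A : Matrix m n ℝ) : n → ℝ :=
  fun j => Real.sqrt (((show (Aᵀ * A).IsHermitian from Matrix.isHermitian_conjTranspose_mul_self A)).eigenvalues j)

/-- The Schatten p-(quasi)norm of a real matrix, for a real exponent `p > 0`. -/
noncomputable def schattenF {m n : Type*} [Fintype m] [Fintype n] [DecidableEq n]
    (p : ℝ) (A : Matrix m n ℝ) : ℝ :=
  (∑ j, singVals A j ^ p) ^ (1 / p)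

/-- The spectral norm (Schatten ∞-norm): the largest singular value. -/
noncomputable def specNorm {m n : Type*} [Fintype m] [Fintype n] [DecidableEq n]
    (A : Matrix m n ℝ) : ℝ :=
  ⨆ j, singVals A j

open Classical in
/-- The Schatten p-norm with exponent `p ∈ (0,∞]`. -/
noncomputable def schattenE {m n : Type*} [Fintype m] [Fintype n] [DecidableEq n]
    (p : ℝ≥0∞) (A : Matrix m n ℝ) : ℝ :=
  if p = ⊤ then specNorm A else schattenF p.toReal A

/-- Number of nonzero entries of a matrix. -/
noncomputable def nnz {m n : Type*} [Fintype m] [Fintype n] (A : Matrix m n ℝ) : ℕ :=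
  (Finset.univ.filter fun ij : m × n => A ij.1 ij.2 ≠ 0).card

/-!
Put `u i = |x i| ^ p`, `β = q / p` and `δ = ε ^ p`, so that `u i ^ β = |x i| ^ q` and
`δ ^ β = ε ^ q`: the claim becomes an `ℓ₁ → ℓ_β` statement about the nonnegative vector `u`.
Since `x'` has at most `s` nonzero entries, the `s` largest entries `S` of `u` carry all but a
`δ`-fraction of its mass `P`. Let `T ⊇ S` hold the `5s` largest entries and let `t` be the
smallest entry of `T \ S`. The tail outside `T` has mass `R ≤ δP - 4st` and entries `≤ t`, so
its `ℓ_β`-mass is at most `t^(β-1) R`; by the power-mean inequality the head has `ℓ_β`-mass at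
least `((1-δ)P)^β / s^(β-1)`. The tangent-line inequality for `t ↦ t^β` bounds
`β (4st)^(β-1) (δP - 4st)` by `(δP)^β`, Bernoulli gives `1 - δ^β ≤ β (1 - δ)`, and
`4 (1 - δ) ≥ 1` since `δ ≤ ε < 1/e`. Together these give
`tail · (1 - δ^β) ≤ δ^β · head`, which rearranges to `tail ≤ δ^β · total`.
-/

open Finset Real

def IsTopSet {ι α : Type*} [LE α] (f : ι → α) (T : Finset ι) : Prop :=
  ∀ i ∈ T, ∀ j ∉ T, f j ≤ f i

namespace IsTopSet

variable {ι α M : Type*} [DecidableEq ι]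

theorem exists_superset_card_eq [Fintype ι] [LinearOrder α] {f : ι → α} {S : Finset ι}
    (hS : IsTopSet f S) {m : ℕ} (hSm : #S ≤ m) (hm : m ≤ Fintype.card ι) :
    ∃ T, S ⊆ T ∧ #T = m ∧ IsTopSet f T := by
  induction m, hSm using Nat.le_induction with
  | base => exact ⟨S, subset_rfl, rfl, hS⟩
  | succ m _ ih =>
    obtain ⟨T, hST, hTm, hT⟩ := ih (by omega)
    have hTc : Tᶜ.Nonempty := by
      rw [← card_pos, card_compl, hTm]; omega
    obtain ⟨k, hk, hkmax⟩ := exists_max_image Tᶜ f hTc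
    rw [mem_compl] at hk
    refine ⟨insert k T, hST.trans (subset_insert _ _), by rw [card_insert_of_notMem hk, hTm], ?_⟩
    intro i hi j hj
    rw [mem_insert, not_or] at hj
    rcases mem_insert.1 hi with rfl | hi
    · exact hkmax j (mem_compl.2 hj.2)
    · exact hT i hi j hj.2

variable [AddCommMonoid M] [LinearOrder M] [IsOrderedAddMonoid M] {g : ι → M} {T W : Finset ι}

theorem sum_sdiff_le_sum_sdiff (hT : IsTopSet g T) (hg : ∀ i, 0 ≤ g i) (hWT : #W ≤ #T) :
    ∑ i ∈ W \ T, g i ≤ ∑ i ∈ T \ W, g i := by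
  have hcard : #(W \ T) ≤ #(T \ W) := by
    rw [card_sdiff, card_sdiff, inter_comm]; omega
  rcases (T \ W).eq_empty_or_nonempty with hTW | ⟨i, hi⟩
  · rw [hTW, card_empty, Nat.le_zero, card_eq_zero] at hcard
    rw [hcard, hTW]
  obtain ⟨k, hk, hkmin⟩ := exists_min_image (T \ W) g ⟨i, hi⟩
  calc ∑ i ∈ W \ T, g i ≤ #(W \ T) • g k :=
        sum_le_card_nsmul _ _ _ fun j hj => hT k (mem_sdiff.1 hk).1 j (mem_sdiff.1 hj).2
    _ ≤ #(T \ W) • g k := nsmul_le_nsmul_left (hg k) hcard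
    _ ≤ ∑ i ∈ T \ W, g i := card_nsmul_le_sum _ _ _ hkmin

theorem sum_compl_le_sum_compl [Fintype ι] (hT : IsTopSet g T) (hg : ∀ i, 0 ≤ g i)
    (hWT : #W ≤ #T) : ∑ i ∈ Tᶜ, g i ≤ ∑ i ∈ Wᶜ, g i := by
  rw [← sum_inter_add_sum_sdiff Tᶜ Wᶜ, ← sum_inter_add_sum_sdiff Wᶜ Tᶜ, inter_comm,
    compl_sdiff_compl, compl_sdiff_compl]
  exact add_le_add_right (hT.sum_sdiff_le_sum_sdiff hg hWT) _

end IsTopSet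

namespace Real

theorem one_sub_rpow_le_mul_one_sub {δ β : ℝ} (hδ : 0 ≤ δ) (hβ : 1 ≤ β) :
    1 - δ ^ β ≤ β * (1 - δ) := by
  have h := one_add_mul_self_le_rpow_one_add (s := δ - 1) (by linarith) hβ
  rw [add_sub_cancel] at h
  linarith

theorem mul_rpow_sub_one_mul_sub_le_rpow_sub_rpow {a b β : ℝ} (ha : 0 ≤ a) (hb : 0 ≤ b)
    (hβ : 1 ≤ β) : β * b ^ (β - 1) * (a - b) ≤ a ^ β - b ^ β := by
  rcases hb.eq_or_lt with rfl | hb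
  · rcases hβ.eq_or_lt with rfl | hβ
    · simp
    rw [zero_rpow (by linarith), zero_rpow (by linarith)]
    simpa using rpow_nonneg ha β
  have h := one_add_mul_self_le_rpow_one_add (s := a / b - 1)
    (by linarith [div_nonneg ha hb.le]) hβ
  rw [add_sub_cancel, div_rpow ha hb.le, le_div_iff₀ (rpow_pos_of_pos hb β)] at h
  have hb' : b ^ (β - 1) = b ^ β / b := rpow_sub_one hb.ne' β
  rw [hb']
  field_simp at h ⊢
  linarith

end Real

theorem rpow_sub_one_mul_mul_one_sub_rpow_le {β δ c s t P R H : ℝ} (hβ : 1 ≤ β) (hδ : 0 ≤ δ)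
    (hc : 0 < c) (hcδ : 1 ≤ c * (1 - δ)) (hs : 0 < s) (ht : 0 ≤ t) (hP : 0 ≤ P) (hR : 0 ≤ R)
    (hRP : R + c * s * t ≤ δ * P) (hH : ((1 - δ) * P) ^ β ≤ s ^ (β - 1) * H) :
    t ^ (β - 1) * R * (1 - δ ^ β) ≤ δ ^ β * H := by
  have hδ1 : 0 < 1 - δ := by nlinarith
  have hcs : 0 < c * s := mul_pos hc hs
  have hγ : 0 ≤ β - 1 := by linarith
  have tangent : β * (c * s * t) ^ (β - 1) * (δ * P - c * s * t) ≤ (δ * P) ^ β := by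
    have := mul_rpow_sub_one_mul_sub_le_rpow_sub_rpow (a := δ * P) (b := c * s * t)
      (by nlinarith) (by positivity) hβ
    linarith [rpow_nonneg (by positivity : 0 ≤ c * s * t) β]
  have hscale : 1 ≤ c ^ (β - 1) * (1 - δ) ^ (β - 1) := by
    rw [← mul_rpow hc.le hδ1.le]
    exact one_le_rpow hcδ hγ
  calc t ^ (β - 1) * R * (1 - δ ^ β)
      ≤ t ^ (β - 1) * (δ * P - c * s * t) * (β * (1 - δ)) := by
        gcongr
        · linarith [rpow_le_one hδ (by linarith) (by linarith : 0 ≤ β)]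
        · exact mul_nonneg (rpow_nonneg ht _) (by linarith)
        · linarith
        · exact one_sub_rpow_le_mul_one_sub hδ hβ
    _ = (1 - δ) / (c * s) ^ (β - 1) * (β * (c * s * t) ^ (β - 1) * (δ * P - c * s * t)) := by
        rw [mul_rpow hcs.le ht]
        field_simp
    _ ≤ (1 - δ) / (c * s) ^ (β - 1) * (δ * P) ^ β := by gcongr
    _ = δ ^ β * ((1 - δ) / c ^ (β - 1) * P ^ β / s ^ (β - 1)) := by
        rw [mul_rpow hδ hP, mul_rpow hc.le hs.le]
        ring
    _ ≤ δ ^ β * ((1 - δ) ^ β * P ^ β / s ^ (β - 1)) := by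
        gcongr
        rw [div_le_iff₀ (by positivity), ← sub_add_cancel β 1, rpow_add_one hδ1.ne',
          add_sub_cancel_right]
        nlinarith
    _ ≤ δ ^ β * H := by
        gcongr
        rw [← mul_rpow hδ1.le hP, div_le_iff₀' (by positivity)]
        exact hH

theorem sum_compl_rpow_le_of_sum_compl_le {ι : Type*} [Fintype ι] [DecidableEq ι] {u : ι → ℝ}
    (hu : ∀ i, 0 ≤ u i) {β δ c : ℝ} (hβ : 1 ≤ β) (hδ : 0 ≤ δ) (hc : 0 < c)
    (hcδ : 1 ≤ c * (1 - δ)) {S T : Finset ι} (hS : S.Nonempty) (hST : S ⊆ T)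
    (hT : IsTopSet u T) (hcard : c * #S ≤ #(T \ S))
    (hSc : ∑ i ∈ Sᶜ, u i ≤ δ * ∑ i, u i) :
    ∑ i ∈ Tᶜ, u i ^ β ≤ δ ^ β * ∑ i, u i ^ β := by
  have hδ1 : 0 < 1 - δ := by nlinarith
  have hS₀ : (0 : ℝ) < #S := by exact_mod_cast hS.card_pos
  obtain ⟨k, hk, hkmin⟩ := exists_min_image (T \ S) u <|
    card_pos.1 (by exact_mod_cast (mul_pos hc hS₀).trans_le hcard)
  set t := u k
  have htail : ∀ j ∈ Tᶜ, u j ^ β ≤ t ^ (β - 1) * u j := fun j hj => by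
    have hsplit := rpow_add' (hu j) (by linarith : β - 1 + 1 ≠ 0)
    rw [sub_add_cancel, rpow_one] at hsplit
    rw [hsplit]
    exact mul_le_mul_of_nonneg_right
      (rpow_le_rpow (hu j) (hT k (mem_sdiff.1 hk).1 j (mem_compl.1 hj)) (by linarith)) (hu j)
  have hmid : c * #S * t ≤ ∑ i ∈ T \ S, u i := by
    have := card_nsmul_le_sum (T \ S) u t hkmin
    rw [nsmul_eq_mul] at this
    nlinarith [hu k]
  have hsplit : ∑ i ∈ Sᶜ, u i = ∑ i ∈ Tᶜ, u i + ∑ i ∈ T \ S, u i := by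
    rw [← sum_inter_add_sum_sdiff Sᶜ Tᶜ, inter_eq_right.2 (compl_subset_compl.2 hST),
      compl_sdiff_compl]
  have hhead : ((1 - δ) * ∑ i, u i) ^ β ≤ (#S : ℝ) ^ (β - 1) * ∑ i ∈ S, u i ^ β := by
    refine (rpow_le_rpow ?_ ?_ (by linarith)).trans
      (rpow_sum_le_const_mul_sum_rpow_of_nonneg S hβ fun i _ => hu i)
    · exact mul_nonneg hδ1.le (sum_nonneg fun i _ => hu i)
    · linarith [sum_add_sum_compl S u]
  have hcore := rpow_sub_one_mul_mul_one_sub_rpow_le hβ hδ hc hcδ hS₀ (hu k)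
    (sum_nonneg fun i _ => hu i) (sum_nonneg fun i _ => hu i) (by linarith) hhead
  have hQ : ∑ i ∈ S, u i ^ β + ∑ i ∈ Tᶜ, u i ^ β ≤ ∑ i, u i ^ β := by
    rw [← sum_add_sum_compl S]
    exact add_le_add_right (sum_le_sum_of_subset_of_nonneg (compl_subset_compl.2 hST)
      fun i _ _ => rpow_nonneg (hu i) _) _
  have hD : ∑ i ∈ Tᶜ, u i ^ β ≤ t ^ (β - 1) * ∑ i ∈ Tᶜ, u i := by
    rw [mul_sum]
    exact sum_le_sum htail
  have hδβ : δ ^ β ≤ 1 := rpow_le_one hδ (by linarith) (by linarith)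
  have hDH : (∑ i ∈ Tᶜ, u i ^ β) * (1 - δ ^ β) ≤ δ ^ β * ∑ i ∈ S, u i ^ β :=
    (mul_le_mul_of_nonneg_right hD (by linarith)).trans hcore
  nlinarith [mul_le_mul_of_nonneg_left hQ (rpow_nonneg hδ β)]

theorem IsTopSet.rpow {ι : Type*} {f : ι → ℝ} {T : Finset ι} (hT : IsTopSet f T)
    (hf : ∀ i, 0 ≤ f i) {p : ℝ} (hp : 0 ≤ p) : IsTopSet (fun i => f i ^ p) T :=
  fun i hi j hj => rpow_le_rpow (hf j) (hT i hi j hj) hp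

section Vectors

variable {n : ℕ}

theorem lpNorm_le_mul_lpNorm_iff {p ε : ℝ} (hp : 0 < p) (hε : 0 ≤ ε) (x y : Fin n → ℝ) :
    lpNorm p y ≤ ε * lpNorm p x ↔ ∑ i, |y i| ^ p ≤ ε ^ p * ∑ i, |x i| ^ p := by
  have hX : 0 ≤ ∑ i, |x i| ^ p := sum_nonneg fun i _ => rpow_nonneg (abs_nonneg _) _
  have hY : 0 ≤ ∑ i, |y i| ^ p := sum_nonneg fun i _ => rpow_nonneg (abs_nonneg _) _
  rw [lpNorm, lpNorm, ← rpow_le_rpow_iff hY (by positivity) (one_div_pos.2 hp),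
    mul_rpow (rpow_nonneg hε p) hX, ← rpow_mul hε, mul_one_div_cancel hp.ne',
    rpow_one]

theorem isHead_piecewise {x : Fin n → ℝ} {c : ℕ} {T : Finset (Fin n)}
    (hT : IsTopSet (fun i => |x i|) T) (hcard : #T = min c n) : IsHead x c (T.piecewise x 0) :=
  ⟨T, hcard, fun _ hi => T.piecewise_eq_of_mem _ _ hi,
    fun _ hi => T.piecewise_eq_of_notMem _ _ hi, hT⟩

theorem nnzv_piecewise_le (x : Fin n → ℝ) (T : Finset (Fin n)) :
    nnzv (T.piecewise x 0) ≤ #T :=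
  card_le_card fun i hi => by
    by_contra hiT
    simp [T.piecewise_eq_of_notMem _ _ hiT] at hi

theorem sum_abs_sub_piecewise_rpow {q : ℝ} (hq : q ≠ 0) (x : Fin n → ℝ) (T : Finset (Fin n)) :
    ∑ i, |(x - T.piecewise x 0) i| ^ q = ∑ i ∈ Tᶜ, |x i| ^ q := by
  rw [← sum_add_sum_compl T, sum_eq_zero fun i hi => ?_, zero_add]
  · refine sum_congr rfl fun i hi => ?_
    rw [Pi.sub_apply, T.piecewise_eq_of_notMem _ _ (mem_compl.1 hi), Pi.zero_apply, sub_zero]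
  · rw [Pi.sub_apply, T.piecewise_eq_of_mem _ _ hi, sub_self, abs_zero, zero_rpow hq]

theorem sum_compl_rpow_le_of_nnzv_le {p ε : ℝ} (hp : 0 < p) (hε : 0 ≤ ε) {x x' : Fin n → ℝ}
    {S : Finset (Fin n)} (hS : IsTopSet (fun i => |x i|) S) (hcard : nnzv x' ≤ #S)
    (hx' : lpNorm p (x - x') ≤ ε * lpNorm p x) :
    ∑ i ∈ Sᶜ, |x i| ^ p ≤ ε ^ p * ∑ i, |x i| ^ p := by
  set W := univ.filter fun i => x' i ≠ 0
  calc ∑ i ∈ Sᶜ, |x i| ^ p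
      ≤ ∑ i ∈ Wᶜ, |x i| ^ p :=
        (hS.rpow (fun i => abs_nonneg _) hp.le).sum_compl_le_sum_compl
          (fun i => rpow_nonneg (abs_nonneg _) _) hcard
    _ = ∑ i ∈ Wᶜ, |(x - x') i| ^ p := sum_congr rfl fun i hi => by
        rw [Pi.sub_apply, show x' i = 0 by simpa [W] using hi, sub_zero]
    _ ≤ ∑ i, |(x - x') i| ^ p :=
        sum_le_sum_of_subset_of_nonneg (subset_univ _)
          fun i _ _ => rpow_nonneg (abs_nonneg _) _
    _ ≤ ε ^ p * ∑ i, |x i| ^ p := (lpNorm_le_mul_lpNorm_iff hp hε x _).1 hx'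

theorem exists_isTopSet_sum_compl_rpow_le {p q ε : ℝ} {s c : ℕ} (hs : 0 < s) (hc : 0 < c)
    (hp : 0 < p) (hpq : p ≤ q) (hε : 0 ≤ ε) (hcε : 1 ≤ c * (1 - ε ^ p)) {x x' : Fin n → ℝ}
    (hx'nnz : nnzv x' ≤ s) (hx' : lpNorm p (x - x') ≤ ε * lpNorm p x) :
    ∃ T : Finset (Fin n), IsTopSet (fun i => |x i|) T ∧ #T = min ((c + 1) * s) n ∧
      ∑ i ∈ Tᶜ, |x i| ^ q ≤ ε ^ q * ∑ i, |x i| ^ q := by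
  rcases le_or_gt n ((c + 1) * s) with hn | hn
  · refine ⟨univ, fun i _ j hj => absurd (mem_univ j) hj, by simp [hn], ?_⟩
    rw [compl_univ, sum_empty]
    positivity
  obtain ⟨S, -, hScard, hS⟩ := IsTopSet.exists_superset_card_eq (f := fun i => |x i|)
    (S := ∅) (by simp [IsTopSet]) (m := s) (by simp) (by simp; nlinarith)
  obtain ⟨T, hST, hTcard, hT⟩ :=
    hS.exists_superset_card_eq (m := (c + 1) * s) (by nlinarith) (by simp; omega)
  have hcard : #(T \ S) = c * #S := by
    rw [card_sdiff_of_subset hST, hTcard, hScard, add_mul, one_mul, Nat.add_sub_cancel]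
  have key := sum_compl_rpow_le_of_sum_compl_le (fun i => rpow_nonneg (abs_nonneg (x i)) p)
    ((one_le_div hp).2 hpq) (rpow_nonneg hε p) (by exact_mod_cast hc) hcε
    (card_pos.1 (by omega)) hST (hT.rpow (fun i => abs_nonneg _) hp.le)
    (by rw [hcard]; push_cast; rfl)
    (sum_compl_rpow_le_of_nnzv_le hp hε hS (hScard ▸ hx'nnz) hx')
  refine ⟨T, hT, by omega, ?_⟩
  simpa only [← rpow_mul (abs_nonneg _), ← rpow_mul hε, mul_div_cancel₀ _ hp.ne'] using key

end Vectors

/-- with the universal constant `C = 5`, an `(ε, ℓ_p, s)`-norm sparsifier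
implies an `(ε, ℓ_q, 5s)`-norm sparsifier of the form `x_head(k)` for some `k ≤ 5s`. -/
theorem stmt0 (n s : ℕ) (hs : 0 < s) (p q ε : ℝ) (hp : 1 ≤ p) (hpq : p < q)
    (hε0 : 0 < ε) (hε1 : ε < 1 / Real.exp 1) (x x' : Fin n → ℝ)
    (hx'nnz : nnzv x' ≤ s) (hx' : lpNorm p (x - x') ≤ ε * lpNorm p x) :
    ∃ k ≤ 5 * s, ∃ y : Fin n → ℝ, IsHead x k y ∧ nnzv y ≤ 5 * s ∧
      lpNorm q (x - y) ≤ ε * lpNorm q x := by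
  have hp0 : 0 < p := by linarith
  have hq0 : 0 < q := by linarith
  have hεp : ε ^ p ≤ 1 / 2 := by
    have : 1 / Real.exp 1 ≤ 1 / 2 :=
      one_div_le_one_div_of_le two_pos (by linarith [add_one_le_exp 1])
    exact (rpow_le_self_of_le_one hε0.le (by linarith) hp).trans (by linarith)
  obtain ⟨T, hT, hcard, hsum⟩ := exists_isTopSet_sum_compl_rpow_le (c := 4) hs four_pos hp0
    hpq.le hε0.le (by push_cast; linarith) hx'nnz hx'
  refine ⟨5 * s, le_rfl, T.piecewise x 0, isHead_piecewise hT hcard,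
    (nnzv_piecewise_le x T).trans (hcard ▸ min_le_left _ _), ?_⟩
  rwa [lpNorm_le_mul_lpNorm_iff hq0 hε0.le, sum_abs_sub_piecewise_rpow hq0.ne']
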